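/- arXiv:2103.05444 — 3 statements merged into one kernel-verified Lean document; each statement's English description precedes it below -/
import Mathlib

section
/- Let u : ℕ → ℝ be a nonnegative sequence satisfying u_{k+1} ≤ (1 - c/k) u_k + d/k^{p+1} for all k ≥ 1, where d > 0, p > 0, c > p. Then u_k ≤ d (c - p)^{-1} k^{-p} + o(k^{-p}) as k → ∞. -/
open Filter Asymptotics

/-!
Put `a = d / (c - p)`. Bernoulli's inequality `(1 - q / k) k^{-q} ≤ (k + 1)^{-q}` (for `q ≥ 0`)
makes every profile `a k^{-p} + B k^{-c}` with `B ≥ 0` a supersolution of the recursion: the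
`a`-part absorbs the forcing term `d / k^{p+1}` exactly because `a (c - p) = d`. Once `k ≥ c` the
coefficient `1 - c / k` is nonnegative, so choosing `B` to dominate `u` at one index `K ≥ c`,
induction keeps `u` below the profile, and `B k^{-c} = o(k^{-p})` because `c > p`.
-/

theorem Real.one_sub_mul_le_one_add_rpow_neg {s q : ℝ} (hs : 0 ≤ s) (hq : 0 ≤ q) :
    1 - q * s ≤ (1 + s) ^ (-q) := by
  have hpos : 0 < 1 + s := by linarith
  have hlog : Real.log (1 + s) ≤ s := by linarith [Real.log_le_sub_one_of_pos hpos]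
  calc 1 - q * s ≤ Real.log (1 + s) * -q + 1 := by nlinarith
    _ ≤ Real.exp (Real.log (1 + s) * -q) := Real.add_one_le_exp _
    _ = (1 + s) ^ (-q) := (Real.rpow_def_of_pos hpos _).symm

theorem Real.one_sub_div_mul_rpow_neg_le {k q : ℝ} (hk : 0 < k) (hq : 0 ≤ q) :
    (1 - q / k) * k ^ (-q) ≤ (k + 1) ^ (-q) := by
  have hsplit : k + 1 = k * (1 + 1 / k) := by field_simp
  rw [hsplit, Real.mul_rpow hk.le (by positivity), mul_comm]
  have := Real.one_sub_mul_le_one_add_rpow_neg (s := 1 / k) (by positivity) hq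
  rw [← mul_one_div q k]
  exact mul_le_mul_of_nonneg_left this (by positivity)

theorem isLittleO_natCast_rpow_neg {p c : ℝ} (hpc : p < c) :
    (fun k : ℕ => (k : ℝ) ^ (-c)) =o[atTop] fun k : ℕ => (k : ℝ) ^ (-p) := by
  suffices h : (fun x : ℝ => x ^ (-c)) =o[atTop] fun x : ℝ => x ^ (-p) from
    h.comp_tendsto tendsto_natCast_atTop_atTop
  refine isLittleO_of_tendsto' ?_ ?_
  · filter_upwards [eventually_gt_atTop (0 : ℝ)] with x hx h0
    exact absurd h0 (Real.rpow_pos_of_pos hx _).ne'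
  · refine (tendsto_rpow_neg_atTop (sub_pos.mpr hpc)).congr' ?_
    filter_upwards [eventually_gt_atTop (0 : ℝ)] with x hx
    rw [← Real.rpow_sub hx]
    ring_nf

theorem le_of_le_of_recursion {u w α e : ℕ → ℝ} {K : ℕ} (hK : u K ≤ w K)
    (hα : ∀ k, K ≤ k → 0 ≤ α k)
    (hu : ∀ k, K ≤ k → u (k + 1) ≤ α k * u k + e k)
    (hw : ∀ k, K ≤ k → α k * w k + e k ≤ w (k + 1)) :
    ∀ k, K ≤ k → u k ≤ w k := by
  intro k hk
  induction k, hk using Nat.le_induction with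
  | base => exact hK
  | succ k hk ih =>
    calc u (k + 1) ≤ α k * u k + e k := hu k hk
      _ ≤ α k * w k + e k := by gcongr; exact hα k hk
      _ ≤ w (k + 1) := hw k hk

theorem polyak_supersolution {a B c d p k : ℝ} (ha : 0 ≤ a) (hB : 0 ≤ B) (hp : 0 ≤ p)
    (hpc : p < c) (had : a * (c - p) = d) (hk : 0 < k) :
    (1 - c / k) * (a * k ^ (-p) + B * k ^ (-c)) + d / k ^ (p + 1) ≤
      a * (k + 1) ^ (-p) + B * (k + 1) ^ (-c) := by
  have hdk : d / k ^ (p + 1) = a * ((c - p) / k * k ^ (-p)) := by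
    rw [← had, Real.rpow_add hk, Real.rpow_one, Real.rpow_neg hk.le]
    field_simp
  have hsplit : (1 - c / k) * (a * k ^ (-p) + B * k ^ (-c)) + d / k ^ (p + 1) =
      a * ((1 - p / k) * k ^ (-p)) + B * ((1 - c / k) * k ^ (-c)) := by
    rw [hdk]; ring
  rw [hsplit]
  gcongr
  · exact Real.one_sub_div_mul_rpow_neg_le hk hp
  · exact Real.one_sub_div_mul_rpow_neg_le hk (hp.trans hpc.le)

theorem polyak_eventually_le_profile {u : ℕ → ℝ} {c d p : ℝ} (hd : 0 < d) (hp : 0 < p)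
    (hpc : p < c)
    (hrec : ∀ k : ℕ, 1 ≤ k → u (k + 1) ≤ (1 - c / k) * u k + d / (k : ℝ) ^ (p + 1)) :
    ∃ B : ℝ, ∀ᶠ k : ℕ in atTop, u k ≤ d * (c - p)⁻¹ * (k : ℝ) ^ (-p) + B * (k : ℝ) ^ (-c) := by
  set a := d * (c - p)⁻¹
  have hcp : 0 < c - p := sub_pos.mpr hpc
  have ha : 0 ≤ a := by positivity
  have had : a * (c - p) = d := by rw [mul_assoc, inv_mul_cancel₀ hcp.ne', mul_one]
  obtain ⟨K, hcK, hK⟩ : ∃ K : ℕ, c ≤ K ∧ 1 ≤ K := by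
    obtain ⟨K, hK⟩ := exists_nat_ge c
    exact ⟨K + 1, by push_cast; linarith, by omega⟩
  have hKpos : (0 : ℝ) < K := by exact_mod_cast hK
  refine ⟨|u K| * (K : ℝ) ^ c, eventually_atTop.mpr ⟨K, ?_⟩⟩
  refine le_of_le_of_recursion ?_ (fun k hk => ?_) (fun k hk => hrec k (hK.trans hk))
    (fun k hk => ?_)
  · rw [mul_assoc |u K|, ← Real.rpow_add hKpos, add_neg_cancel, Real.rpow_zero, mul_one]
    linarith [le_abs_self (u K), mul_nonneg ha (Real.rpow_nonneg hKpos.le (-p))]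
  · rw [sub_nonneg, div_le_one (hKpos.trans_le (by exact_mod_cast hk))]
    exact hcK.trans (by exact_mod_cast hk)
  · push_cast
    exact polyak_supersolution ha (by positivity) hp.le hpc had
      (hKpos.trans_le (by exact_mod_cast hk))

theorem polyak_lemma_general (u : ℕ → ℝ) (c d p : ℝ)
    (hd : 0 < d) (hp : 0 < p) (hcp : p < c)
    (hrec : ∀ k : ℕ, 1 ≤ k → u (k + 1) ≤ (1 - c / k) * u k + d / (k : ℝ) ^ (p + 1)) :
    ∃ r : ℕ → ℝ,
      (∀ k : ℕ, 1 ≤ k → u k ≤ d * (c - p)⁻¹ * (k : ℝ) ^ (-p) + r k) ∧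
      r =o[atTop] (fun k : ℕ => (k : ℝ) ^ (-p)) := by
  obtain ⟨B, hB⟩ := polyak_eventually_le_profile hd hp hcp hrec
  set a := d * (c - p)⁻¹
  refine ⟨fun k => max (u k - a * (k : ℝ) ^ (-p)) (B * (k : ℝ) ^ (-c)), fun k _ => ?_, ?_⟩
  · linarith [le_max_left (u k - a * (k : ℝ) ^ (-p)) (B * (k : ℝ) ^ (-c))]
  · refine ((isLittleO_natCast_rpow_neg hcp).const_mul_left B).congr' ?_ EventuallyEq.rfl
    filter_upwards [hB] with k hk
    exact (max_eq_right (by linarith)).symm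

theorem polyak_lemma (u : ℕ → ℝ) (c d p : ℝ)
    (hd : 0 < d) (hp : 0 < p) (hc : 0 < c) (hcp : p < c)
    (hnonneg : ∀ k, 1 ≤ k → 0 ≤ u k)
    (hrec : ∀ k : ℕ, 1 ≤ k → u (k + 1) ≤ (1 - c / k) * u k + d / (k : ℝ) ^ (p + 1)) :
    ∃ r : ℕ → ℝ,
      (∀ k : ℕ, 1 ≤ k → u k ≤ d * (c - p)⁻¹ * (k : ℝ) ^ (-p) + r k) ∧
      r =o[atTop] (fun k : ℕ => (k : ℝ) ^ (-p)) :=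
  polyak_lemma_general u c d p hd hp hcp hrec
end

section
/- Let λ ∈ (0,1) and let u : ℕ → ℝ satisfy 0 ≤ u_t ≤ Σ_{s=1}^{t} λ^{t-s} / √s for all t ≥ 1. Then for every γ > 0 there exists C_γ > 0 such that u_t ≤ C_γ / t^{1/2 − γ} for all t ≥ 1. -/
open Finset

lemma my_sqrt_subadd (x y : ℝ) (hx : 0 ≤ x) (hy : 0 ≤ y) :
    Real.sqrt (x + y) ≤ Real.sqrt x + Real.sqrt y := by
  have h : x + y ≤ (Real.sqrt x + Real.sqrt y) ^ 2 := by
    have hx' := Real.sq_sqrt hx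
    have hy' := Real.sq_sqrt hy
    have := Real.sqrt_nonneg x
    have := Real.sqrt_nonneg y
    nlinarith [mul_nonneg (Real.sqrt_nonneg x) (Real.sqrt_nonneg y)]
  calc Real.sqrt (x + y) ≤ Real.sqrt ((Real.sqrt x + Real.sqrt y) ^ 2) :=
        Real.sqrt_le_sqrt h
    _ = Real.sqrt x + Real.sqrt y := by
        rw [Real.sqrt_sq (by positivity)]

theorem geometric_convolution_decay (lam : ℝ) (hlam0 : 0 < lam) (hlam1 : lam < 1)
    (u : ℕ → ℝ)
    (hu : ∀ t : ℕ, 1 ≤ t →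
      0 ≤ u t ∧ u t ≤ ∑ s ∈ Finset.Icc 1 t, lam ^ (t - s) / Real.sqrt s) :
    ∀ γ : ℝ, 0 < γ → ∃ C : ℝ, 0 < C ∧
      ∀ t : ℕ, 1 ≤ t → u t ≤ C / (t : ℝ) ^ ((1 : ℝ) / 2 - γ) := by
  intro γ hγ
  set f : ℕ → ℝ := fun k => ((k : ℝ) + 2) * lam ^ k with hf
  have hlamnorm : ‖lam‖ < 1 := by
    rw [Real.norm_eq_abs, abs_of_pos hlam0]; exact hlam1
  have hsum1 : Summable (fun n : ℕ => (n : ℝ) ^ 1 * lam ^ n) :=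
    summable_pow_mul_geometric_of_norm_lt_one 1 hlamnorm
  have hsum2 : Summable (fun n : ℕ => (2 : ℝ) * lam ^ n) :=
    (summable_geometric_of_lt_one hlam0.le hlam1).mul_left 2
  have hsumf : Summable f := by
    have := hsum1.add hsum2
    convert this using 2 with n
    simp [hf]; ring
  have hfnonneg : ∀ k, 0 ≤ f k := fun k => by positivity
  set C := ∑' k, f k with hC
  have hCpos : 0 < C := by
    have h0 : f 0 ≤ C := Summable.le_tsum hsumf 0 (fun j _ => hfnonneg j)
    have : f 0 = 2 := by simp [hf]
    linarith
  refine ⟨C, hCpos, ?_⟩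
  intro t ht
  have htR : (1 : ℝ) ≤ (t : ℝ) := by exact_mod_cast ht
  have hsqrt_t : (1 : ℝ) ≤ Real.sqrt t := by
    rw [show (1:ℝ) = Real.sqrt 1 by simp]
    exact Real.sqrt_le_sqrt htR
  have hsqrt_t_pos : 0 < Real.sqrt t := by linarith
  -- step 1: per-term bound
  have hterm : ∀ s ∈ Finset.Icc 1 t,
      lam ^ (t - s) / Real.sqrt s ≤ f (t - s) / Real.sqrt t := by
    intro s hs
    rw [Finset.mem_Icc] at hs
    obtain ⟨hs1, hst⟩ := hs
    set k := t - s with hk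
    have hsR : (1 : ℝ) ≤ (s : ℝ) := by exact_mod_cast hs1
    have hsqrt_s : (1 : ℝ) ≤ Real.sqrt s := by
      rw [show (1:ℝ) = Real.sqrt 1 by simp]
      exact Real.sqrt_le_sqrt hsR
    have hsqrt_s_pos : 0 < Real.sqrt s := by linarith
    have hcast : (t : ℝ) = (s : ℝ) + (k : ℝ) := by
      rw [hk, Nat.cast_sub hst]
      ring
    have hsub : Real.sqrt t ≤ Real.sqrt s + Real.sqrt k := by
      rw [hcast]
      exact my_sqrt_subadd _ _ (by positivity) (by positivity)
    have hk1 : Real.sqrt k ≤ (k : ℝ) + 1 := by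
      nlinarith [Real.sq_sqrt (Nat.cast_nonneg k : (0:ℝ) ≤ k),
        Real.sqrt_nonneg (k : ℝ), sq_nonneg (Real.sqrt k - 1)]
    have key : Real.sqrt t ≤ Real.sqrt s * ((k : ℝ) + 2) := by
      have : Real.sqrt k ≤ Real.sqrt s * ((k : ℝ) + 1) := by
        nlinarith [Real.sqrt_nonneg (k : ℝ)]
      nlinarith
    rw [div_le_div_iff₀ hsqrt_s_pos hsqrt_t_pos]
    have hpow : 0 < lam ^ k := pow_pos hlam0 k
    calc lam ^ k * Real.sqrt t ≤ lam ^ k * (Real.sqrt s * ((k : ℝ) + 2)) := by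
          exact mul_le_mul_of_nonneg_left key hpow.le
      _ = f k * Real.sqrt s := by rw [hf]; ring
  -- step 2: sum bound
  have hsum_le : ∑ s ∈ Finset.Icc 1 t, lam ^ (t - s) / Real.sqrt s
      ≤ C / Real.sqrt t := by
    calc ∑ s ∈ Finset.Icc 1 t, lam ^ (t - s) / Real.sqrt s
        ≤ ∑ s ∈ Finset.Icc 1 t, f (t - s) / Real.sqrt t :=
          Finset.sum_le_sum hterm
      _ = (∑ s ∈ Finset.Icc 1 t, f (t - s)) / Real.sqrt t := by
          rw [Finset.sum_div]
      _ = (∑ k ∈ Finset.range t, f k) / Real.sqrt t := by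
          congr 1
          refine Finset.sum_nbij' (fun s => t - s) (fun k => t - k) ?_ ?_ ?_ ?_ ?_
          · intro s hs; rw [Finset.mem_Icc] at hs; simp only [Finset.mem_range]; omega
          · intro k hk; rw [Finset.mem_range] at hk; simp only [Finset.mem_Icc]; omega
          · intro s hs; rw [Finset.mem_Icc] at hs; omega
          · intro k hk; rw [Finset.mem_range] at hk; omega
          · intro s _; rfl
      _ ≤ C / Real.sqrt t := by
          gcongr
          exact Summable.sum_le_tsum _ (fun k _ => hfnonneg k) hsumf
  -- step 3: compare denominators
  have hden : (t : ℝ) ^ ((1 : ℝ) / 2 - γ) ≤ Real.sqrt t := by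
    rw [Real.sqrt_eq_rpow]
    exact Real.rpow_le_rpow_of_exponent_le htR (by linarith)
  have hdenpos : 0 < (t : ℝ) ^ ((1 : ℝ) / 2 - γ) :=
    Real.rpow_pos_of_pos (by linarith) _
  obtain ⟨_, hu2⟩ := hu t ht
  calc u t ≤ C / Real.sqrt t := le_trans hu2 hsum_le
    _ ≤ C / (t : ℝ) ^ ((1 : ℝ) / 2 - γ) := by gcongr
end

section
/- Let ρ ∈ (0,1) and suppose a nonnegative sequence w : ℕ → ℝ satisfies w_{t+1} ≤ ρ_{t+1} w_t + c₁ α(t+1)^{3/2} + c₂ α(t+1) ε(t), where ρ_{t+1} = max(1 − μ α(t+1), L α(t+1) − 1), α(t) = α(0)/(1+t) with α(0) ≤ min(1/(2L), μ/(4L²)), and ε(t) ≤ C_γ / t^{1/2−γ} for some γ ∈ (0, 1/2) with μ α(0) > 1/2 − γ. Then w_t ≤ (c₁ α(0)^{3/2} + c₂ α(0) C_γ)/((μ α(0) − 1/2 + γ)) · (1+t)^{−(1/2−γ)} + o((1+t)^{−(1/2−γ)}). -/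
/-!
Put `p = 1/2 - γ` and `u t = (1 + t)^p w t`. Since `α (t+1) = α₀ / (t + 2)`, multiplying the
recursion by `(t + 2)^p` and bounding the weight ratio `((t + 2) / (t + 1))^p ≤ 1 + p / (t + 1)`
(Bernoulli) turns it, for every `κ < μ α₀ - p` and all large `t`, into a Chung-type recursion
`u (t+1) ≤ (1 - κ / (t + 2)) u t + f t / (t + 2)` with `f t → c₁ α₀^(3/2) + c₂ α₀ Cγ`.
While `u` lies above a level `c > lim f / (μ α₀ - p)`, it drops by a fixed multiple of
`1 / (t + 2)`, whose sum diverges; once below `c` it stays there. Hence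
`limsup u ≤ lim f / (μ α₀ - p)`, which is the claimed rate.
-/

open Filter Asymptotics Topology

theorem eventually_le_of_le_max_sub {u g : ℕ → ℝ} {c : ℝ} (hg0 : ∀ t, 0 ≤ g t)
    (hg : ¬Summable g) (h : ∀ᶠ t in atTop, u (t + 1) ≤ max (u t - g t) c) :
    ∀ᶠ t in atTop, u t ≤ c := by
  obtain ⟨T, hT⟩ := eventually_atTop.1 h
  have hreach : ∃ t₀ ≥ T, u t₀ ≤ c := by
    by_contra! habove
    have hdesc : ∀ n, u (T + n) ≤ u T - ∑ k ∈ Finset.range n, g (k + T) := by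
      intro n
      induction n with
      | zero => simp
      | succ n ih =>
        have hstep := hT (T + n) (by omega)
        rw [le_max_iff] at hstep
        rw [← add_assoc, Finset.sum_range_succ, add_comm n T]
        have := habove (T + n + 1) (by omega)
        rcases hstep with hstep | hstep <;> linarith
    have hsum := (not_summable_iff_tendsto_nat_atTop_of_nonneg fun k => hg0 (k + T)).1
      (mt (summable_nat_add_iff T).1 hg)
    obtain ⟨n, hn⟩ := (hsum.eventually_ge_atTop (u T - c)).exists
    linarith [hdesc n, habove (T + n) (by omega)]
  obtain ⟨t₀, ht₀T, ht₀⟩ := hreach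
  refine eventually_atTop.2 ⟨t₀, fun t ht => ?_⟩
  induction t, ht using Nat.le_induction with
  | base => exact ht₀
  | succ t ht ih => exact (hT t (ht₀T.trans ht)).trans (max_le (by linarith [hg0 t]) le_rfl)

theorem not_summable_div_add_two {η : ℝ} (hη : η ≠ 0) :
    ¬Summable fun t : ℕ => η / ((t : ℝ) + 2) := by
  intro hs
  apply Real.not_summable_one_div_natCast
  rw [← summable_nat_add_iff 2]
  refine (hs.mul_left η⁻¹).congr fun t => ?_
  push_cast
  field_simp

theorem eventually_le_of_chung {u f : ℕ → ℝ} {a b : ℝ} (ha : 0 < a)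
    (hf : ∀ b' > b, ∀ᶠ t in atTop, f t ≤ b')
    (hu : ∀ κ < a, ∀ᶠ t in atTop,
      u (t + 1) ≤ (1 - κ / ((t : ℝ) + 2)) * u t + f t / ((t : ℝ) + 2)) :
    ∀ c > b / a, ∀ᶠ t in atTop, u t ≤ c := by
  intro c hc
  rw [gt_iff_lt, div_lt_iff₀ ha] at hc
  obtain ⟨b', hbb', hb'c⟩ := exists_between hc
  have hκ : ∀ᶠ κ in 𝓝[<] a, 0 < κ ∧ b' < κ * c := by
    have hlim : Tendsto (fun κ => κ * c) (𝓝[<] a) (𝓝 (a * c)) :=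
      ((continuous_id.mul continuous_const).tendsto a).mono_left nhdsWithin_le_nhds
    exact (eventually_of_mem (Ioo_mem_nhdsLT ha) fun κ hκ => hκ.1).and
      (hlim.eventually_const_lt (by linarith))
  obtain ⟨κ, ⟨hκ0, hκc⟩, hκa⟩ := (hκ.and self_mem_nhdsWithin).exists
  -- above the level `c`, each step lowers `u` by at least `(κ c - b') / (t + 2)`
  refine eventually_le_of_le_max_sub (g := fun t => (κ * c - b') / ((t : ℝ) + 2))
    (fun t => by positivity) (not_summable_div_add_two (by linarith)) ?_
  filter_upwards [hu κ hκa, hf b' (by linarith),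
    (tendsto_atTop_add_const_right _ 2 tendsto_natCast_atTop_atTop).eventually_ge_atTop κ]
    with t hrec hft hκs
  have hs : (0 : ℝ) < (t : ℝ) + 2 := by positivity
  have hrec' : u (t + 1) ≤ u t - (κ * u t - b') / ((t : ℝ) + 2) := by
    calc u (t + 1) ≤ (1 - κ / ((t : ℝ) + 2)) * u t + b' / ((t : ℝ) + 2) := hrec.trans (by gcongr)
      _ = _ := by field_simp; ring
  rcases le_or_gt (u t) c with hle | hgt
  · have hκs' : 0 ≤ 1 - κ / ((t : ℝ) + 2) := by rw [sub_nonneg, div_le_one hs]; exact hκs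
    refine le_max_of_le_right (hrec'.trans ?_)
    calc u t - (κ * u t - b') / ((t : ℝ) + 2)
        = c - ((κ * c - b') / ((t : ℝ) + 2) + (1 - κ / ((t : ℝ) + 2)) * (c - u t)) := by
          field_simp; ring
      _ ≤ c := sub_le_self _ <|
          add_nonneg (div_nonneg (by linarith) hs.le) (mul_nonneg hκs' (sub_nonneg.2 hle))
  · refine le_max_of_le_left (hrec'.trans ?_)
    gcongr

theorem eventually_one_sub_div_mul_rpow_le {A p κ : ℝ} (hp0 : 0 ≤ p) (hp1 : p ≤ 1)
    (hκ : κ < A - p) :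
    ∀ᶠ s : ℝ in atTop, (1 - A / s) * (s / (s - 1)) ^ p ≤ 1 - κ / s := by
  filter_upwards [eventually_ge_atTop 2, eventually_ge_atTop A,
    eventually_ge_atTop ((A * (1 - p) - κ) / (A - p - κ))] with s hs2 hsA hslin
  have hs : 0 < s := by linarith
  have hs1 : 0 < s - 1 := by linarith
  rw [div_le_iff₀ (by linarith)] at hslin
  have hbern : (s / (s - 1)) ^ p ≤ 1 + p * (1 / (s - 1)) := by
    have hinv : 0 < 1 / (s - 1) := by positivity
    have := rpow_one_add_le_one_add_mul_self (s := 1 / (s - 1)) (by linarith) hp0 hp1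
    rwa [show 1 + 1 / (s - 1) = s / (s - 1) by field_simp; ring] at this
  calc (1 - A / s) * (s / (s - 1)) ^ p ≤ (1 - A / s) * (1 + p * (1 / (s - 1))) := by
        gcongr
        rw [sub_nonneg, div_le_one hs]; exact hsA
    _ ≤ 1 - κ / s := by
        rw [← sub_nonneg]
        have key : 1 - κ / s - (1 - A / s) * (1 + p * (1 / (s - 1)))
            = ((A - p - κ) * s - (A * (1 - p) - κ)) / (s * (s - 1)) := by
          field_simp; ring
        rw [key]
        exact div_nonneg (by linarith) (by positivity)

theorem eventually_weighted_succ_le {w r : ℕ → ℝ} {A p κ : ℝ} (hp0 : 0 ≤ p) (hp1 : p ≤ 1)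
    (hκ : κ < A - p) (hw : ∀ t, 0 ≤ w t)
    (h : ∀ᶠ t in atTop,
      w (t + 1) ≤ (1 - A / ((t : ℝ) + 2)) * w t + r t / ((t : ℝ) + 2) ^ (1 + p)) :
    ∀ᶠ t in atTop, w (t + 1) * (1 + ((t + 1 : ℕ) : ℝ)) ^ p ≤
      (1 - κ / ((t : ℝ) + 2)) * (w t * (1 + (t : ℝ)) ^ p) + r t / ((t : ℝ) + 2) := by
  have hs : Tendsto (fun t : ℕ => (t : ℝ) + 2) atTop atTop :=
    tendsto_atTop_add_const_right _ 2 tendsto_natCast_atTop_atTop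
  filter_upwards [h, hs.eventually (eventually_one_sub_div_mul_rpow_le hp0 hp1 hκ),
    hs.eventually_ge_atTop A] with t hrec hfactor hA
  set s : ℝ := (t : ℝ) + 2
  have hs0 : 0 < s := by positivity
  have hs1 : s - 1 = 1 + (t : ℝ) := by ring
  have hcast : 1 + ((t + 1 : ℕ) : ℝ) = s := by push_cast; ring
  have hweight : s ^ p * w t = (s / (s - 1)) ^ p * (w t * (1 + (t : ℝ)) ^ p) := by
    rw [hs1, Real.div_rpow hs0.le (by positivity)]
    field_simp
  have hscale : s ^ p * (r t / s ^ (1 + p)) = r t / s := by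
    rw [Real.rpow_add hs0, Real.rpow_one]
    field_simp
  rw [hcast]
  calc w (t + 1) * s ^ p ≤ ((1 - A / s) * w t + r t / s ^ (1 + p)) * s ^ p := by gcongr
    _ = (1 - A / s) * (s / (s - 1)) ^ p * (w t * (1 + (t : ℝ)) ^ p) + r t / s := by
        rw [mul_assoc (1 - A / s), ← hweight, ← hscale]; ring
    _ ≤ (1 - κ / s) * (w t * (1 + (t : ℝ)) ^ p) + r t / s := by
        gcongr
        exact mul_nonneg (hw t) (by positivity)

theorem eventually_succ_le_of_harmonic_stepsize {w α ρ ε : ℕ → ℝ} {μ L c₁ c₂ C α₀ p : ℝ}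
    (hp : p ≤ 1 / 2) (hc₁ : 0 ≤ c₁) (hc₂ : 0 ≤ c₂) (hα₀ : 0 ≤ α₀)
    (hα : ∀ t, α t = α₀ / (1 + t)) (hρ : ∀ t, ρ t = max (1 - μ * α t) (L * α t - 1))
    (hε : ∀ t : ℕ, 1 ≤ t → ε t ≤ C / (t : ℝ) ^ p) (hw : ∀ t, 0 ≤ w t)
    (hrec : ∀ t : ℕ, w (t + 1) ≤ ρ (t + 1) * w t
      + c₁ * (α (t + 1)) ^ ((3 : ℝ) / 2) + c₂ * α (t + 1) * ε t) :
    ∀ᶠ t in atTop, w (t + 1) ≤ (1 - μ * α₀ / ((t : ℝ) + 2)) * w t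
      + (c₁ * α₀ ^ ((3 : ℝ) / 2) + c₂ * α₀ * C * (((t : ℝ) + 2) / t) ^ p)
        / ((t : ℝ) + 2) ^ (1 + p) := by
  have hs : Tendsto (fun t : ℕ => (t : ℝ) + 2) atTop atTop :=
    tendsto_atTop_add_const_right _ 2 tendsto_natCast_atTop_atTop
  filter_upwards [eventually_ge_atTop 1, hs.eventually_ge_atTop ((L + μ) * α₀ / 2)]
    with t ht hLμ
  set s : ℝ := (t : ℝ) + 2 with hs_def
  have ht0 : (0 : ℝ) < t := by exact_mod_cast ht
  have hs1 : 1 ≤ s := by linarith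
  have hs0 : 0 < s := by linarith
  have hαs : α (t + 1) = α₀ / s := by rw [hα]; push_cast; ring
  -- for large `t` the contraction factor is `1 - μ α`, as `L α - 1 ≤ 1 - μ α` once `(L + μ) α ≤ 2`
  have hρs : ρ (t + 1) ≤ 1 - μ * α₀ / s := by
    have hsmall : (L + μ) * α₀ / s ≤ 2 := by rw [div_le_iff₀ hs0]; linarith
    rw [hρ, hαs]
    exact max_le (le_of_eq (by ring))
      (by linarith [show L * (α₀ / s) - 1 = (L + μ) * α₀ / s - 1 - μ * α₀ / s by ring])
  have hdrift : c₁ * (α₀ / s) ^ ((3 : ℝ) / 2) ≤ c₁ * α₀ ^ ((3 : ℝ) / 2) / s ^ (1 + p) := by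
    rw [Real.div_rpow hα₀ hs0.le, mul_div_assoc]
    gcongr
    linarith
  have hnoise : c₂ * (α₀ / s) * ε t ≤ c₂ * α₀ * C * (s / t) ^ p / s ^ (1 + p) := by
    have htp : 0 < (t : ℝ) ^ p := by positivity
    have hsp : 0 < s ^ p := by positivity
    calc c₂ * (α₀ / s) * ε t ≤ c₂ * (α₀ / s) * (C / (t : ℝ) ^ p) := by
          gcongr; exact hε t ht
      _ = c₂ * α₀ * C * (s / t) ^ p / s ^ (1 + p) := by
          rw [Real.div_rpow hs0.le ht0.le, Real.rpow_add hs0, Real.rpow_one]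
          field_simp
  have hstep := hrec t
  rw [hαs] at hstep
  rw [add_div]
  linarith [mul_le_mul_of_nonneg_right hρs (hw t)]

theorem exists_le_add_isLittleO {ι : Type*} {l : Filter ι} {w g : ι → ℝ} {M : ℝ}
    (hg : ∀ i, 0 ≤ g i) (h : ∀ δ > 0, ∀ᶠ i in l, w i ≤ (M + δ) * g i) :
    ∃ β : ι → ℝ, (∀ i, w i ≤ M * g i + β i) ∧ β =o[l] g := by
  refine ⟨fun i => max (w i - M * g i) 0, fun i => by linarith [le_max_left (w i - M * g i) 0],
    isLittleO_iff.2 fun δ hδ => ?_⟩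
  filter_upwards [h δ hδ] with i hi
  rw [Real.norm_of_nonneg (le_max_right _ _), Real.norm_of_nonneg (hg i)]
  exact max_le (by linarith) (by have := hg i; positivity)

theorem wasserstein_rate_general (w : ℕ → ℝ) (μconst L c₁ c₂ γ Cγ α₀ : ℝ)
    (hc₁ : 0 ≤ c₁) (hc₂ : 0 ≤ c₂)
    (hγ : 0 < γ) (hγ' : γ < 1 / 2)
    (hα₀ : 0 < α₀)
    (hrate : μconst * α₀ > 1 / 2 - γ)
    (α : ℕ → ℝ) (hα : ∀ t, α t = α₀ / (1 + t))
    (ρ : ℕ → ℝ) (hρ : ∀ t, ρ t = max (1 - μconst * α t) (L * α t - 1))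
    (ε : ℕ → ℝ) (hε : ∀ t : ℕ, 1 ≤ t → ε t ≤ Cγ / (t : ℝ) ^ ((1 : ℝ) / 2 - γ))
    (hw : ∀ t, 0 ≤ w t)
    (hrec : ∀ t : ℕ, w (t + 1) ≤ ρ (t + 1) * w t
      + c₁ * (α (t + 1)) ^ ((3 : ℝ) / 2) + c₂ * α (t + 1) * ε t) :
    ∃ β : ℕ → ℝ,
      (∀ t : ℕ, w t ≤
        (c₁ * α₀ ^ ((3 : ℝ) / 2) + c₂ * α₀ * Cγ) / (μconst * α₀ - 1 / 2 + γ) *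
          ((1 + t : ℝ)) ^ (-((1 : ℝ) / 2 - γ)) + β t) ∧
      β =o[atTop] (fun t : ℕ => ((1 + t : ℝ)) ^ (-((1 : ℝ) / 2 - γ))) := by
  set p : ℝ := 1 / 2 - γ with hp
  have hratio : Tendsto (fun t : ℕ => (((t : ℝ) + 2) / t) ^ p) atTop (𝓝 1) := by
    simpa using ((tendsto_natCast_div_add_atTop (2 : ℝ)).inv₀ one_ne_zero).rpow_const
      (Or.inl (by norm_num)) (p := p)
  have hforcing := (hratio.const_mul (c₂ * α₀ * Cγ)).const_add (c₁ * α₀ ^ ((3 : ℝ) / 2))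
  rw [mul_one] at hforcing
  have hweighted := eventually_le_of_chung (u := fun t => w t * (1 + (t : ℝ)) ^ p)
    (a := μconst * α₀ - 1 / 2 + γ) (by linarith) (fun b' hb' => hforcing.eventually_le_const hb')
    fun κ hκ => eventually_weighted_succ_le (by linarith) (by linarith) (by linarith) hw
      (eventually_succ_le_of_harmonic_stepsize (by linarith) hc₁ hc₂ hα₀.le hα hρ hε hw hrec)
  refine exists_le_add_isLittleO (fun t => by positivity) fun δ hδ => ?_
  filter_upwards [hweighted _ (lt_add_of_pos_right _ hδ)] with t ht
  rw [Real.rpow_neg (by positivity), ← div_eq_mul_inv, le_div_iff₀ (by positivity)]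
  exact ht

theorem wasserstein_rate (w : ℕ → ℝ) (μconst L c₁ c₂ γ Cγ α₀ : ℝ)
    (hμ : 0 < μconst) (hL : 0 < L) (hc₁ : 0 ≤ c₁) (hc₂ : 0 ≤ c₂)
    (hγ : 0 < γ) (hγ' : γ < 1 / 2) (hCγ : 0 < Cγ)
    (hα₀ : 0 < α₀) (hα₀' : α₀ ≤ min (1 / (2 * L)) (μconst / (4 * L ^ 2)))
    (hrate : μconst * α₀ > 1 / 2 - γ)
    (α : ℕ → ℝ) (hα : ∀ t, α t = α₀ / (1 + t))
    (ρ : ℕ → ℝ) (hρ : ∀ t, ρ t = max (1 - μconst * α t) (L * α t - 1))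
    (ε : ℕ → ℝ) (hε : ∀ t : ℕ, 1 ≤ t → ε t ≤ Cγ / (t : ℝ) ^ ((1 : ℝ) / 2 - γ))
    (hw : ∀ t, 0 ≤ w t)
    (hrec : ∀ t : ℕ, w (t + 1) ≤ ρ (t + 1) * w t
      + c₁ * (α (t + 1)) ^ ((3 : ℝ) / 2) + c₂ * α (t + 1) * ε t) :
    ∃ β : ℕ → ℝ,
      (∀ t : ℕ, w t ≤
        (c₁ * α₀ ^ ((3 : ℝ) / 2) + c₂ * α₀ * Cγ) / (μconst * α₀ - 1 / 2 + γ) *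
          ((1 + t : ℝ)) ^ (-((1 : ℝ) / 2 - γ)) + β t) ∧
      β =o[atTop] (fun t : ℕ => ((1 + t : ℝ)) ^ (-((1 : ℝ) / 2 - γ))) :=
  wasserstein_rate_general w μconst L c₁ c₂ γ Cγ α₀ hc₁ hc₂ hγ hγ' hα₀ hrate α hα ρ hρ ε hε hw hrec
end
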